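/- In a connected red-black partial reduction G_RB^k, every active character was, before its realization, adjacent to every species in S_B(G_RB^k) (the species currently incident only to black edges). -/

import Mathlib

open Classical

/-- A red-black graph: a bipartite graph on characters `C` and species `S`
with edges colored black or red. -/
structure RBGraph (S C : Type) where
  black : C → S → Prop
  red : C → S → Prop

namespace RBGraph

variable {S C : Type}

/-- `c` and `s` are adjacent (by an edge of either color). -/
def adj (G : RBGraph S C) (c : C) (s : S) : Prop := G.black c s ∨ G.red c s

/-- The underlying simple graph on `S ⊕ C`. -/
def toSimple (G : RBGraph S C) : SimpleGraph (S ⊕ C) where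
  Adj x y := (∃ s c, x = Sum.inl s ∧ y = Sum.inr c ∧ G.adj c s) ∨
             (∃ s c, x = Sum.inr c ∧ y = Sum.inl s ∧ G.adj c s)
  symm := by
    constructor
    rintro x y (⟨s, c, rfl, rfl, h⟩ | ⟨s, c, rfl, rfl, h⟩)
    · exact Or.inr ⟨s, c, rfl, rfl, h⟩
    · exact Or.inl ⟨s, c, rfl, rfl, h⟩
  loopless := by
    constructor
    rintro x (⟨s, c, rfl, h, -⟩ | ⟨s, c, rfl, h, -⟩) <;> simp at h

/-- `s` lies in the connected component of `c`. -/
def sameComp (G : RBGraph S C) (c : C) (s : S) : Prop :=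
  G.toSimple.Reachable (Sum.inr c) (Sum.inl s)

/-- A character is active if it is incident to a red edge. -/
def active (G : RBGraph S C) (c : C) : Prop := ∃ s, G.red c s

/-- A character is inactive if it is incident to no red edge. -/
def inactive (G : RBGraph S C) (c : C) : Prop := ¬ G.active c

/-- A character adjacent via red edges to all species of its connected component. -/
def redUniversal (G : RBGraph S C) (c : C) : Prop :=
  G.active c ∧ ∀ s, G.sameComp c s → G.red c s

/-- Remove all edges of red-universal characters (one round). -/
def pruneStep (G : RBGraph S C) : RBGraph S C :=
  ⟨fun c s => G.black c s ∧ ¬ G.redUniversal c,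
   fun c s => G.red c s ∧ ¬ G.redUniversal c⟩

/-- Repeatedly remove all edges of red-universal characters. -/
def prune [Fintype C] (G : RBGraph S C) : RBGraph S C :=
  pruneStep^[Fintype.card C] G

/-- Realization of a character `c`: add red edges from `c` to the species of its
connected component not adjacent to `c`, delete the black edges of `c`, then
repeatedly remove the edges of red-universal characters. -/
def realize [Fintype C] (G : RBGraph S C) (c : C) : RBGraph S C :=
  prune ⟨fun c' s => G.black c' s ∧ c' ≠ c,
         fun c' s => G.red c' s ∨ (c' = c ∧ ¬ G.black c s ∧ G.sameComp c s)⟩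

/-- Realize a sequence of characters in order. -/
def realizeSeq [Fintype C] (G : RBGraph S C) (l : List C) : RBGraph S C :=
  l.foldl realize G

/-- The graph has no edges. -/
def edgeless (G : RBGraph S C) : Prop := ∀ c s, ¬ G.adj c s

/-- A red Σ-graph: an induced all-red path `s1 - c1 - s2 - c2 - s3`. -/
def redSigma (G : RBGraph S C) : Prop :=
  ∃ (c1 c2 : C) (s1 s2 s3 : S), c1 ≠ c2 ∧ s1 ≠ s2 ∧ s2 ≠ s3 ∧ s1 ≠ s3 ∧
    G.red c1 s1 ∧ G.red c1 s2 ∧ G.red c2 s2 ∧ G.red c2 s3 ∧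
    ¬ G.adj c1 s3 ∧ ¬ G.adj c2 s1

/-- A reduction of a red-black graph: an ordering of its (non-isolated) inactive
characters whose successive realizations yield an edgeless graph, never creating
a red Σ-graph. -/
def isReductionFrom [Fintype C] (G : RBGraph S C) (l : List C) : Prop :=
  l.Nodup ∧ (∀ c, G.inactive c → (∃ s, G.black c s) → c ∈ l) ∧
  (∀ c ∈ l, G.inactive c) ∧
  edgeless (realizeSeq G l) ∧
  ∀ k ≤ l.length, ¬ redSigma (realizeSeq G (l.take k))

/-- A red-black graph is reducible if it admits a reduction. -/
def reducible [Fintype C] (G : RBGraph S C) : Prop := ∃ l, isReductionFrom G l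

/-- A character is safe if its realization yields a reducible red-black graph. -/
def safe [Fintype C] (G : RBGraph S C) (c : C) : Prop := reducible (G.realize c)

/-- The (all-black) red-black graph of a binary species-character matrix. -/
def ofMatrix (M : C → S → Prop) : RBGraph S C := ⟨M, fun _ _ => False⟩

/-- A reduction of the graph of a matrix: an ordering of all characters whose
successive realizations yield an edgeless graph, never creating a red Σ-graph. -/
def isReduction [Fintype C] (M : C → S → Prop) (l : List C) : Prop :=
  l.Nodup ∧ (∀ c, c ∈ l) ∧ edgeless (realizeSeq (ofMatrix M) l) ∧
  ∀ k ≤ l.length, ¬ redSigma (realizeSeq (ofMatrix M) (l.take k))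

/-- The partial reduction after realizing the first `t` characters of `l`. -/
def partialRed [Fintype C] (M : C → S → Prop) (l : List C) (t : ℕ) : RBGraph S C :=
  realizeSeq (ofMatrix M) (l.take t)

/-- The matrix is maximal: no character's species set is contained in that of
another character. -/
def MaximalM (M : C → S → Prop) : Prop :=
  ∀ c1 c2 : C, c1 ≠ c2 → ¬ (∀ s, M c1 s → M c2 s)

/-- A vertex is non-isolated if it has an incident edge. -/
def nonIsolated (G : RBGraph S C) : S ⊕ C → Prop
  | Sum.inl s => ∃ c, G.adj c s
  | Sum.inr c => ∃ s, G.adj c s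

/-- The graph has a single connected component (ignoring isolated vertices). -/
def singleComponent (G : RBGraph S C) : Prop :=
  ∀ x y, G.nonIsolated x → G.nonIsolated y → G.toSimple.Reachable x y

/-- Species incident only to black edges (and at least one of them). -/
def SB (G : RBGraph S C) : Set S := {s | (∃ c, G.black c s) ∧ ∀ c, ¬ G.red c s}

/-- Species incident to at least one red edge. -/
def SR (G : RBGraph S C) : Set S := {s | ∃ c, G.red c s}

/-- Inactive characters whose neighborhood is contained in `S_R`. -/
def CC (G : RBGraph S C) : Set C :=
  {c | G.inactive c ∧ (∃ s, G.black c s) ∧ ∀ s, G.black c s → s ∈ G.SR}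

/-- Inactive characters with a neighbor and a non-neighbor in `S_R`. -/
def CI (G : RBGraph S C) : Set C :=
  {c | G.inactive c ∧ (∃ s ∈ G.SR, G.black c s) ∧ (∃ s ∈ G.SR, ¬ G.black c s)}

/-- Inactive characters with a neighbor in `S_B` that are universal on `S_R`. -/
def CU (G : RBGraph S C) : Set C :=
  {c | G.inactive c ∧ (∃ s ∈ G.SB, G.black c s) ∧ ∀ s ∈ G.SR, G.black c s}

/-- The subgraph induced by a set of characters and a set of species. -/
def induced (G : RBGraph S C) (Cs : Set C) (Ss : Set S) : RBGraph S C :=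
  ⟨fun c s => G.black c s ∧ c ∈ Cs ∧ s ∈ Ss,
   fun c s => G.red c s ∧ c ∈ Cs ∧ s ∈ Ss⟩

/-- `c2` is the center of an induced path on four species and three characters. -/
def isP7Center (M : C → S → Prop) (c2 : C) : Prop :=
  ∃ (c1 c3 : C) (s1 s2 s3 s4 : S),
    c1 ≠ c2 ∧ c2 ≠ c3 ∧ c1 ≠ c3 ∧
    s1 ≠ s2 ∧ s1 ≠ s3 ∧ s1 ≠ s4 ∧ s2 ≠ s3 ∧ s2 ≠ s4 ∧ s3 ≠ s4 ∧
    M c1 s1 ∧ M c1 s2 ∧ M c2 s2 ∧ M c2 s3 ∧ M c3 s3 ∧ M c3 s4 ∧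
    ¬ M c1 s3 ∧ ¬ M c1 s4 ∧ ¬ M c2 s1 ∧ ¬ M c2 s4 ∧ ¬ M c3 s1 ∧ ¬ M c3 s2

/-- Minimum-degree species none of whose characters is the center of an induced `P7`. -/
def S7m (M : C → S → Prop) : Set S :=
  {s | (∀ s', {c | M c s}.ncard ≤ {c | M c s'}.ncard) ∧
       ∀ c, M c s → ¬ isP7Center M c}

/-- The species of `S_B` not adjacent to `cm`. -/
def SBm (G : RBGraph S C) (cm : C) : Set S := {s | s ∈ G.SB ∧ ¬ G.black cm s}

/-- `C_I` together with the characters of `C_U` with a neighbor in `S_B^m`. -/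
def CBm (G : RBGraph S C) (cm : C) : Set C :=
  G.CI ∪ {c ∈ G.CU | ∃ s ∈ G.SBm cm, G.black c s}

end RBGraph

/-!
Red edges are only ever created at the character being realized, so an active character `c` of
`G_RB^k` was realized at some earlier step, from a graph `G` in which, by connectivity of `G_RB^k`
and since realization never merges components, `c` and `s` lie in one component. Were `c` not
adjacent to `s` in `G`, realization would give it a red edge to `s`; such an edge is only removed
together with all edges of `c`, so `c` would end up either isolated or red-adjacent to `s`,
contradicting `c` active and `s ∈ S_B`.
-/

lemma SimpleGraph.Reachable.of_forall_adj_reachable {V : Type*} {G H : SimpleGraph V}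
    (h : ∀ x y, H.Adj x y → G.Reachable x y) {x y : V} (hxy : H.Reachable x y) :
    G.Reachable x y := by
  rw [SimpleGraph.reachable_iff_reflTransGen] at hxy ⊢
  exact Relation.reflTransGen_closed
    (fun a b hab => (G.reachable_iff_reflTransGen a b).1 (h a b hab)) x y hxy

namespace RBGraph

variable {S C : Type}

lemma toSimple_adj_inr_inl {G : RBGraph S C} {c : C} {s : S} :
    G.toSimple.Adj (.inr c) (.inl s) ↔ G.adj c s := by
  simp [toSimple]

lemma sameComp_of_adj {G : RBGraph S C} {c : C} {s : S} (h : G.adj c s) : G.sameComp c s :=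
  (toSimple_adj_inr_inl.2 h).reachable

lemma nonIsolated_of_sameComp {G : RBGraph S C} {c : C} {s : S} (h : G.sameComp c s) :
    G.nonIsolated (.inr c) := by
  obtain ⟨w⟩ := h
  cases w with
  | cons hadj _ =>
    rcases hadj with ⟨_, _, h₁, -⟩ | ⟨s', _, h₁, rfl, ha⟩
    · cases h₁
    · cases h₁
      exact ⟨s', ha⟩

lemma reachable_of_forall_adj_sameComp {G H : RBGraph S C}
    (h : ∀ c s, H.adj c s → G.sameComp c s) {x y : S ⊕ C} (hxy : H.toSimple.Reachable x y) :
    G.toSimple.Reachable x y := by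
  refine hxy.of_forall_adj_reachable ?_
  rintro _ _ (⟨s, c, rfl, rfl, ha⟩ | ⟨s, c, rfl, rfl, ha⟩)
  · exact (h c s ha).symm
  · exact h c s ha

/-- Stable under realizations, since pruning deletes a red edge only together with every edge
of its character. -/
def RedOrIsolated (G : RBGraph S C) (c : C) (s : S) : Prop :=
  G.red c s ∨ ¬ G.nonIsolated (.inr c)

lemma RedOrIsolated.pruneStep {G : RBGraph S C} {c : C} {s : S} (h : G.RedOrIsolated c s) :
    (pruneStep G).RedOrIsolated c s := by
  by_cases hu : G.redUniversal c
  · exact .inr fun ⟨_, ha⟩ => ha.elim (·.2 hu) (·.2 hu)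
  · exact h.imp (⟨·, hu⟩) fun hiso ⟨s', ha⟩ => hiso ⟨s', ha.imp (·.1) (·.1)⟩

section Realize

variable [Fintype C]

lemma RedOrIsolated.prune {G : RBGraph S C} {c : C} {s : S} (h : G.RedOrIsolated c s) :
    (prune G).RedOrIsolated c s :=
  Function.Iterate.rec (fun H : RBGraph S C => H.RedOrIsolated c s) h
    (fun _ => RedOrIsolated.pruneStep) _

lemma black_of_prune_black {G : RBGraph S C} {c : C} {s : S} (h : (prune G).black c s) :
    G.black c s :=
  Function.Iterate.rec (fun H : RBGraph S C => H.black c s → G.black c s) id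
    (fun H ih (hb : (pruneStep H).black c s) => ih hb.1) _ h

lemma red_of_prune_red {G : RBGraph S C} {c : C} {s : S} (h : (prune G).red c s) :
    G.red c s :=
  Function.Iterate.rec (fun H : RBGraph S C => H.red c s → G.red c s) id
    (fun H ih (hr : (pruneStep H).red c s) => ih hr.1) _ h

lemma black_of_realize_black {G : RBGraph S C} {a c : C} {s : S}
    (h : (G.realize a).black c s) : G.black c s :=
  (black_of_prune_black h).1

lemma red_of_realize_red {G : RBGraph S C} {a c : C} {s : S} (h : (G.realize a).red c s) :
    G.red c s ∨ c = a ∧ G.sameComp a s :=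
  (red_of_prune_red h).imp_right fun ⟨hc, _, hs⟩ => ⟨hc, hs⟩

lemma active_of_realize_active {G : RBGraph S C} {a c : C} (h : (G.realize a).active c) :
    G.active c ∨ c = a := by
  obtain ⟨s, hs⟩ := h
  exact (red_of_realize_red hs).imp (⟨s, ·⟩) (·.1)

lemma reachable_of_realize_reachable {G : RBGraph S C} {a : C} {x y : S ⊕ C}
    (h : (G.realize a).toSimple.Reachable x y) : G.toSimple.Reachable x y := by
  refine reachable_of_forall_adj_sameComp (fun c s hcs => ?_) h
  rcases hcs with hb | hr
  · exact sameComp_of_adj (.inl (black_of_realize_black hb))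
  · rcases red_of_realize_red hr with hr | ⟨rfl, hs⟩
    · exact sameComp_of_adj (.inr hr)
    · exact hs

lemma RedOrIsolated.realize {G : RBGraph S C} {c : C} {s : S} (h : G.RedOrIsolated c s)
    (a : C) : (G.realize a).RedOrIsolated c s := by
  refine RedOrIsolated.prune (h.imp .inl fun hiso ⟨s', ha⟩ => hiso ?_)
  rcases ha with ⟨hb, -⟩ | hr | ⟨rfl, -, hs⟩
  · exact ⟨s', .inl hb⟩
  · exact ⟨s', .inr hr⟩
  · exact nonIsolated_of_sameComp hs

lemma redOrIsolated_realize_self {G : RBGraph S C} {c : C} {s : S} (hb : ¬ G.black c s)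
    (hs : G.sameComp c s) : (G.realize c).RedOrIsolated c s :=
  RedOrIsolated.prune (.inl (.inr ⟨rfl, hb, hs⟩))

lemma realizeSeq_append (G : RBGraph S C) (l₁ l₂ : List C) :
    G.realizeSeq (l₁ ++ l₂) = (G.realizeSeq l₁).realizeSeq l₂ :=
  List.foldl_append

lemma black_of_realizeSeq_black {G : RBGraph S C} {l : List C} {c : C} {s : S}
    (h : (G.realizeSeq l).black c s) : G.black c s := by
  induction l generalizing G with
  | nil => exact h
  | cons a l ih => exact black_of_realize_black (ih h)

lemma active_or_mem_of_realizeSeq_active {G : RBGraph S C} {l : List C} {c : C}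
    (h : (G.realizeSeq l).active c) : G.active c ∨ c ∈ l := by
  induction l generalizing G with
  | nil => exact .inl h
  | cons a l ih =>
    rcases ih h with h | h
    · exact (active_of_realize_active h).imp_right fun (hca : c = a) => hca ▸ List.mem_cons_self
    · exact .inr (List.mem_cons_of_mem _ h)

lemma reachable_of_realizeSeq_reachable {G : RBGraph S C} {l : List C} {x y : S ⊕ C}
    (h : (G.realizeSeq l).toSimple.Reachable x y) : G.toSimple.Reachable x y := by
  induction l generalizing G with
  | nil => exact h
  | cons a l ih => exact reachable_of_realize_reachable (ih h)

lemma RedOrIsolated.realizeSeq {G : RBGraph S C} {c : C} {s : S} (h : G.RedOrIsolated c s)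
    (l : List C) : (G.realizeSeq l).RedOrIsolated c s := by
  induction l generalizing G with
  | nil => exact h
  | cons a l ih => exact ih (h.realize a)

end Realize

end RBGraph

theorem active_was_adjacent_to_SB_general {S C : Type} [Fintype C] (M : C → S → Prop)
    (l : List C) (k : ℕ)
    (Gk : RBGraph S C) (hGk : Gk = RBGraph.partialRed M l k)
    (hconn : Gk.singleComponent) :
    ∀ c, Gk.active c → ∀ s ∈ Gk.SB, M c s := by
  rintro c ⟨s₀, hred⟩ s ⟨⟨c', hblack⟩, hnotred⟩
  subst hGk
  have hmem : c ∈ l.take k :=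
    (RBGraph.active_or_mem_of_realizeSeq_active ⟨s₀, hred⟩).resolve_left fun ⟨_, h⟩ => h
  obtain ⟨l₁, l₂, hsplit⟩ := List.append_of_mem hmem
  set G := (RBGraph.ofMatrix M).realizeSeq l₁
  have hGk : RBGraph.partialRed M l k = (G.realize c).realizeSeq l₂ := by
    rw [RBGraph.partialRed, hsplit, RBGraph.realizeSeq_append]
    rfl
  rw [hGk] at hred hblack hnotred hconn
  have hcomp : G.sameComp c s := RBGraph.reachable_of_realize_reachable <|
    RBGraph.reachable_of_realizeSeq_reachable (hconn _ _ ⟨s₀, .inr hred⟩ ⟨c', .inl hblack⟩)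
  by_contra hM
  have hnb : ¬ G.black c s := fun h => hM (RBGraph.black_of_realizeSeq_black h)
  rcases (RBGraph.redOrIsolated_realize_self hnb hcomp).realizeSeq l₂ with hr | hiso
  · exact hnotred c hr
  · exact hiso ⟨s₀, .inr hred⟩

/-- in a connected partial reduction, every active character was
originally adjacent to every species now incident only to black edges. -/
theorem active_was_adjacent_to_SB {S C : Type} [Fintype C] (M : C → S → Prop)
    (l : List C) (hl : RBGraph.isReduction M l) (k : ℕ) (hk : k ≤ l.length)
    (Gk : RBGraph S C) (hGk : Gk = RBGraph.partialRed M l k)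
    (hconn : Gk.singleComponent) :
    ∀ c, Gk.active c → ∀ s ∈ Gk.SB, M c s :=
  active_was_adjacent_to_SB_general M l k Gk hGk hconn
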